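/- (Lemma 2, single-spike case: an exponentiate-and-fire neuron with reset-to-zero generates the single-spike LTC spike train of its initial potential.) Let E be an integer, T ≥ 1 a natural number, and V₀ a real number. Define the single-spike EF dynamics u : ℕ → ℝ and s : ℕ → Bool by u 0 = V₀, s k = (u k ≥ 2^E), and u (k+1) = 2 · (if s k then 0 else u k). Then at most one k ∈ ℕ satisfies s k = true, and Σ_{k=0}^{T−1} (if s k then 2^{E−k} else 0) = SLA(max(V₀, 0)), where SLA is the single-power logarithmic approximation with exponent range {E−(T−1), …, E}. -/
import Mathlib

/-- The single-power logarithmic approximation of a real number `a ≥ 0`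
with exponent range `{emin, …, emax}`. -/
noncomputable def SLA (emin emax : ℤ) (a : ℝ) : ℝ :=
  if a < (2:ℝ)^emin then 0
  else if a < (2:ℝ)^(emax+1) then (2:ℝ)^(Int.log 2 a)
  else (2:ℝ)^emax

/-- Lemma 2, single-spike case: a single-spike EF neuron (doubling potential,
threshold `2^E`, reset to zero) fires at most one spike and generates the
single-spike LTC spike train encoding `max V₀ 0` with exponent range
`{E−(T−1), …, E}`. -/
theorem single_spike_EF_generates_single_spike_LTC
    (E : ℤ) (T : ℕ) (hT : 1 ≤ T) (V₀ : ℝ)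
    (u : ℕ → ℝ) (s : ℕ → Bool)
    (hu0 : u 0 = V₀)
    (hs : ∀ k, s k = true ↔ (2:ℝ)^E ≤ u k)
    (hu : ∀ k, u (k+1) = 2 * (if s k then 0 else u k)) :
    (∀ k l : ℕ, s k = true → s l = true → k = l) ∧
    ∑ k ∈ Finset.range T, (if s k then (2:ℝ)^(E - (k:ℤ)) else 0)
      = SLA (E - ((T:ℤ) - 1)) E (max V₀ 0) := by
  have h2E : (0:ℝ) < (2:ℝ)^E := zpow_pos (by norm_num) E
  have hsf : ∀ m, u m = 0 → s m = false := by
    intro m hm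
    rw [← Bool.not_eq_true, hs]
    push_neg
    rw [hm]; exact h2E
  have hzero : ∀ m, u m = 0 → ∀ n, u (m + n) = 0 := by
    intro m hm n
    induction n with
    | zero => simpa using hm
    | succ n ih =>
      rw [show m + (n+1) = (m+n)+1 from rfl, hu, hsf _ ih]
      simp [ih]
  have hafter : ∀ k l, s k = true → k < l → s l = false := by
    intro k l hk hl
    have h1 : u (k+1) = 0 := by rw [hu, hk]; simp
    obtain ⟨n, rfl⟩ := Nat.exists_eq_add_of_le hl
    exact hsf _ (hzero _ h1 n)
  have huniq : ∀ k l : ℕ, s k = true → s l = true → k = l := by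
    intro k l hk hl
    rcases lt_trichotomy k l with h | h | h
    · exact absurd hl (by simp [hafter k l hk h])
    · exact h
    · exact absurd hk (by simp [hafter l k hl h])
  refine ⟨huniq, ?_⟩
  have hbefore : ∀ k : ℕ, (∀ j, j < k → s j = false) → u k = 2^(k:ℤ) * V₀ := by
    intro k
    induction k with
    | zero => intro _; simp [hu0]
    | succ k ih =>
      intro h
      have hk : u k = 2^(k:ℤ) * V₀ := ih (fun j hj => h j (hj.trans (Nat.lt_succ_self k)))
      rw [hu, h k (Nat.lt_succ_self k), hk]
      push_cast
      rw [zpow_add₀ (two_ne_zero)]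
      ring
  by_cases hV : V₀ ≤ 0
  · -- no spikes ever
    have hneg : ∀ k, u k ≤ 0 := by
      intro k
      induction k with
      | zero => rw [hu0]; exact hV
      | succ k ih =>
        have : s k = false := by
          rw [← Bool.not_eq_true, hs]; push_neg; exact lt_of_le_of_lt ih h2E
        rw [hu, this]; simp; linarith
    have hall : ∀ k, s k = false := by
      intro k
      rw [← Bool.not_eq_true, hs]; push_neg; exact lt_of_le_of_lt (hneg k) h2E
    have hsum : ∑ k ∈ Finset.range T, (if s k then (2:ℝ)^(E - (k:ℤ)) else 0) = 0 :=
      Finset.sum_eq_zero (fun k _ => by simp [hall k])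
    rw [hsum, max_eq_right hV, SLA, if_pos (zpow_pos (by norm_num : (0:ℝ) < 2) _)]
  · push_neg at hV
    have hmax : max V₀ 0 = V₀ := max_eq_left hV.le
    set L := Int.log 2 V₀ with hLdef
    have hVL : (2:ℝ)^L ≤ V₀ := by
      have := Int.zpow_log_le_self (b := 2) (by norm_num) hV
      simpa using this
    have hVL' : V₀ < (2:ℝ)^(L+1) := by
      have := Int.lt_zpow_succ_log_self (b := 2) (by norm_num) V₀
      simpa using this
    set n₀ : ℕ := (E - L).toNat with hn₀def
    have hn₀ge : E - L ≤ (n₀:ℤ) := Int.self_le_toNat _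
    -- all indices before n₀ don't spike
    have hfirst : ∀ j, j < n₀ → s j = false := by
      intro j
      induction j using Nat.strong_induction_on with
      | _ j ih =>
        intro hj
        have hprev : ∀ i, i < j → s i = false := fun i hi => ih i hi (hi.trans hj)
        have huj : u j = 2^(j:ℤ) * V₀ := hbefore j hprev
        have hjlt : (j:ℤ) < E - L := Int.lt_toNat.mp hj
        rw [← Bool.not_eq_true, hs]
        push_neg
        rw [huj]
        have h1 : V₀ < (2:ℝ)^(E - j) := by
          refine lt_of_lt_of_le hVL' ?_
          exact zpow_le_zpow_right₀ (by norm_num) (by omega)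
        calc 2^(j:ℤ) * V₀ < 2^(j:ℤ) * 2^(E - j) := by
              exact mul_lt_mul_of_pos_left h1 (zpow_pos (by norm_num) _)
          _ = (2:ℝ)^E := by rw [← zpow_add₀ (two_ne_zero : (2:ℝ) ≠ 0)]; ring_nf
    -- spike at n₀
    have hun₀ : u n₀ = 2^(n₀:ℤ) * V₀ := hbefore n₀ hfirst
    have hsn₀ : s n₀ = true := by
      rw [hs, hun₀]
      have h1 : (2:ℝ)^(E - n₀) ≤ V₀ := by
        refine le_trans ?_ hVL
        exact zpow_le_zpow_right₀ (by norm_num) (by omega)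
      calc (2:ℝ)^E = 2^(n₀:ℤ) * 2^(E - n₀) := by
            rw [← zpow_add₀ (two_ne_zero : (2:ℝ) ≠ 0)]; ring_nf
        _ ≤ 2^(n₀:ℤ) * V₀ := by
            exact mul_le_mul_of_nonneg_left h1 (le_of_lt (zpow_pos (by norm_num) _))
    have hschar : ∀ k, s k = true ↔ k = n₀ :=
      fun k => ⟨fun h => huniq k n₀ h hsn₀, fun h => h ▸ hsn₀⟩
    rw [hmax]
    by_cases hn : n₀ < T
    · -- spike inside range, sum = 2^(E - n₀)
      have hsum : ∑ k ∈ Finset.range T, (if s k then (2:ℝ)^(E - (k:ℤ)) else 0)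
          = (2:ℝ)^(E - (n₀:ℤ)) := by
        rw [Finset.sum_eq_single_of_mem n₀ (Finset.mem_range.2 hn)]
        · rw [if_pos hsn₀]
        · intro b _ hb
          have hsb : s b = false := by
            rw [← Bool.not_eq_true]
            exact fun h => hb ((hschar b).mp h)
          simp [hsb]
      rw [hsum]
      by_cases hEL : E ≤ L
      · -- n₀ = 0
        have hn0 : n₀ = 0 := by
          simp only [hn₀def]
          omega
        have hVge : (2:ℝ)^E ≤ V₀ := le_trans (zpow_le_zpow_right₀ (by norm_num) hEL) hVL
        rw [hn0, SLA, if_neg, ]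
        · by_cases h2 : V₀ < (2:ℝ)^(E+1)
          · rw [if_pos h2]
            have hLE : L < E + 1 := (Int.lt_zpow_iff_log_lt (by norm_num) hV).mp (by simpa using h2)
            have : L = E := by omega
            simp [← hLdef, this]
          · rw [if_neg h2]
            norm_num
        · push_neg
          refine le_trans ?_ hVge
          exact zpow_le_zpow_right₀ (by norm_num) (by omega)
      · push_neg at hEL
        have hn₀eq : (n₀:ℤ) = E - L := Int.toNat_of_nonneg (by omega)
        have hLge : E - ((T:ℤ) - 1) ≤ L := by omega
        rw [SLA, if_neg, if_pos]
        · rw [hn₀eq, ← hLdef]; ring_nf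
        · exact lt_of_lt_of_le hVL' (zpow_le_zpow_right₀ (by norm_num) (by omega))
        · push_neg
          refine le_trans ?_ hVL
          exact zpow_le_zpow_right₀ (by norm_num) hLge
    · -- spike outside range, sum = 0
      push_neg at hn
      have hn₀pos : 0 < n₀ := lt_of_lt_of_le hT hn
      have hELpos : 0 < E - L := by
        by_contra h
        push_neg at h
        have : n₀ = 0 := by simp only [hn₀def]; omega
        omega
      have hn₀eq : (n₀:ℤ) = E - L := Int.toNat_of_nonneg (by omega)
      have hsum : ∑ k ∈ Finset.range T, (if s k then (2:ℝ)^(E - (k:ℤ)) else 0) = 0 := by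
        refine Finset.sum_eq_zero (fun k hk => ?_)
        have : s k = false := hfirst k (lt_of_lt_of_le (Finset.mem_range.mp hk) hn)
        simp [this]
      rw [hsum, SLA, if_pos]
      refine lt_of_lt_of_le hVL' ?_
      exact zpow_le_zpow_right₀ (by norm_num) (by omega)
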